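/- In Kretschmer's setting with α > 0, let δ ∈ (0,1) and b := χ_{[0,δ]}. Then val(P_b) = val(D_b) = min{δ, α}, the dual problem (D_b) has an optimal solution (namely z = χ_{[0, min{α,δ}]}), and consequently ∂v(b) ≠ ∅; moreover, the primal problem (P_b) has an optimal solution if and only if α ≤ δ. -/

import Mathlib

open MeasureTheory

/-- Lebesgue measure on `[0,1]`. -/
noncomputable def mu : Measure ℝ := volume.restrict (Set.Icc (0 : ℝ) 1)

lemma mu_ne_top (s : Set ℝ) : mu s ≠ ⊤ := by
  have h1 : mu s ≤ mu Set.univ := measure_mono (Set.subset_univ s)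
  have h2 : mu Set.univ = ENNReal.ofReal 1 := by
    simp [mu, Measure.restrict_apply_univ, Real.volume_Icc]
  exact ne_top_of_le_ne_top (by simp [h2]) h1

/-- Feasibility of `(x, r)` for the primal problem with right-hand side `y`. -/
def Feas (y : ℝ → ℝ) (p : (ℝ → ℝ) × ℝ) : Prop :=
  MemLp p.1 2 mu ∧ (∀ᵐ t ∂mu, 0 ≤ p.1 t) ∧ 0 ≤ p.2 ∧
  ∀ᵐ t ∂mu, y t ≤ (∫ s in Set.Ioc t 1, p.1 s ∂mu) + p.2

/-- The cost `c*(x,r) = ∫_0^1 t x(t) dt + α r`. -/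
noncomputable def cost (α : ℝ) (p : (ℝ → ℝ) × ℝ) : ℝ :=
  (∫ t, t * p.1 t ∂mu) + α * p.2

/-- Kretschmer's value function on `Y = L²[0,1]`. -/
noncomputable def val (α : ℝ) (y : Lp ℝ 2 mu) : EReal :=
  ⨅ (p : (ℝ → ℝ) × ℝ) (_ : Feas (⇑y) p), ((cost α p : ℝ) : EReal)

/-- Dual feasibility: `z ∈ L²₊`, `∫_0^t z ≤ t` a.e. and `∫_0^1 z ≤ α`. -/
def DFeas (α : ℝ) (z : ℝ → ℝ) : Prop :=
  MemLp z 2 mu ∧ (∀ᵐ t ∂mu, 0 ≤ z t) ∧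
  (∀ᵐ t ∂mu, (∫ s in Set.Ioc 0 t, z s ∂mu) ≤ t) ∧ (∫ t, z t ∂mu) ≤ α

/-- The value of the dual problem with right-hand side `b`. -/
noncomputable def valD (α : ℝ) (b : ℝ → ℝ) : EReal :=
  ⨆ (z : ℝ → ℝ) (_ : DFeas α z), ((∫ t, b t * z t ∂mu : ℝ) : EReal)

/-- The subdifferential of the value function at `b ∈ L²`, with `(L²)* ≅ L²`. -/
noncomputable def subdiffL2 (α : ℝ) (b : Lp ℝ 2 mu) : Set (Lp ℝ 2 mu) :=
  {z | ∃ r : ℝ, val α b = (r : EReal) ∧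
    ∀ y : Lp ℝ 2 mu, (((inner ℝ (y - b) z : ℝ) + r : ℝ) : EReal) ≤ val α y}

/-- The indicator function of a measurable set `s ⊆ ℝ` as an element of `L²[0,1]`. -/
noncomputable def chiLp (s : Set ℝ) (hs : MeasurableSet s) : Lp ℝ 2 mu :=
  indicatorConstLp 2 hs (mu_ne_top s) (1 : ℝ)


/-!
Weak duality in a refined form: if `(x, r)` is feasible for `y`, Fubini gives
`∫_{[0,c]} y ≤ ∫₀¹ min(s, c) x(s) ds + c r ≤ c*(x, r)` for every `c ∈ [0, min(α, 1)]`.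
With `c = min(δ, α)` this yields `v(b) ≥ min(δ, α)` and, for arbitrary `y`, the subgradient
inequality for `z = χ_{[0,c]}`. The matching upper bounds come from `(0, 1)` (cost `α`) and from
`(χ_{(δ,u]} / (u - δ), 0)` (cost `≤ u`, with `u ↓ δ`). On the dual side, `∫_{[0,δ]} z ≤ δ`
follows from the constraint `∫_0^t z ≤ t` as `t ↓ δ`.
If `δ < α` and `(x, r)` were optimal, equality in weak duality would force `r = 0` and `x = 0`
on `(δ, 1]`, so feasibility would require `∫_{(t,δ]} x ≥ 1` for a.e. `t < δ`, which contradicts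
the absolute continuity of the integral as `t ↑ δ`.
-/

open Set Filter Topology

instance : IsFiniteMeasure mu := by
  rw [mu]
  infer_instance

instance : NullSingletonClass mu := by
  rw [mu]
  infer_instance

lemma ae_mem_Icc_zero_one : ∀ᵐ t ∂mu, t ∈ Icc (0 : ℝ) 1 :=
  ae_restrict_mem measurableSet_Icc

lemma mu_apply_of_subset {s : Set ℝ} (hs : s ⊆ Icc 0 1) : mu s = volume s := by
  rw [mu, Measure.restrict_apply' measurableSet_Icc, inter_eq_left.2 hs]

lemma mu_real_Icc {a : ℝ} (ha0 : 0 ≤ a) (ha1 : a ≤ 1) : mu.real (Icc 0 a) = a := by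
  rw [measureReal_def, mu_apply_of_subset (Icc_subset_Icc_right ha1), ← measureReal_def,
    Real.volume_real_Icc_of_le ha0, sub_zero]

lemma mu_real_Ioc {a b : ℝ} (ha : 0 ≤ a) (hab : a ≤ b) (hb : b ≤ 1) :
    mu.real (Ioc a b) = b - a := by
  rw [measureReal_def, mu_apply_of_subset (Ioc_subset_Icc_self.trans (Icc_subset_Icc ha hb)),
    ← measureReal_def, Real.volume_real_Ioc_of_le hab]

lemma mu_Ioo_ne_zero {a b : ℝ} (ha : 0 ≤ a) (hab : a < b) (hb : b ≤ 1) : mu (Ioo a b) ≠ 0 := by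
  rw [mu_apply_of_subset (Ioo_subset_Icc_self.trans (Icc_subset_Icc ha hb)), Real.volume_Ioo]
  simpa using hab

lemma mu_real_Icc_inter_Iio {c s : ℝ} (hc : 0 ≤ c) (hs : s ∈ Icc (0 : ℝ) 1) :
    mu.real (Icc 0 c ∩ Iio s) = min s c := by
  have hsub : Icc 0 c ∩ Iio s ⊆ Icc 0 1 := fun t ht => ⟨ht.1.1, ht.2.le.trans hs.2⟩
  rw [measureReal_def, mu_apply_of_subset hsub, ← measureReal_def]
  rcases lt_or_ge c s with h | h
  · rw [inter_eq_left.2 fun t ht => ht.2.trans_lt h, Real.volume_real_Icc_of_le hc, sub_zero,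
      min_eq_right h.le]
  · have hIco : Icc 0 c ∩ Iio s = Ico 0 s := by
      ext t
      simp only [mem_inter_iff, mem_Icc, mem_Iio, mem_Ico]
      constructor
      · exact fun ⟨⟨ht0, _⟩, hts⟩ => ⟨ht0, hts⟩
      · exact fun ⟨ht0, hts⟩ => ⟨⟨ht0, hts.le.trans h⟩, hts⟩
    rw [hIco, Real.volume_real_Ico_of_le hs.1, sub_zero, min_eq_left h]

lemma frequently_nhdsGT_of_ae {P : ℝ → Prop} {a : ℝ} (ha0 : 0 ≤ a) (ha1 : a < 1)
    (h : ∀ᵐ t ∂mu, P t) : ∃ᶠ t in 𝓝[>] a, P t := by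
  intro hnot
  obtain ⟨u, hau, hsub⟩ := mem_nhdsGT_iff_exists_Ioo_subset.1 hnot
  refine mu_Ioo_ne_zero ha0 (lt_min hau ha1) (min_le_right _ _) (measure_mono_null ?_ (ae_iff.1 h))
  exact (Ioo_subset_Ioo_right (min_le_left _ _)).trans hsub

lemma frequently_nhdsLT_of_ae {P : ℝ → Prop} {a : ℝ} (ha0 : 0 < a) (ha1 : a ≤ 1)
    (h : ∀ᵐ t ∂mu, P t) : ∃ᶠ t in 𝓝[<] a, P t := by
  intro hnot
  obtain ⟨l, hla, hsub⟩ := mem_nhdsLT_iff_exists_Ioo_subset.1 hnot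
  refine mu_Ioo_ne_zero (le_max_right l 0) (max_lt hla ha0) ha1
    (measure_mono_null ?_ (ae_iff.1 h))
  exact (Ioo_subset_Ioo_left (le_max_left _ _)).trans hsub

lemma tendsto_setIntegral_Ioc_nhdsLT {x : ℝ → ℝ} (hx : Integrable x mu) (a : ℝ) :
    Tendsto (fun t => ∫ s in Ioc t a, x s ∂mu) (𝓝[<] a) (𝓝 0) := by
  refine hx.tendsto_setIntegral_nhds_zero ?_
  have hlen : Tendsto (fun t => ENNReal.ofReal (a - t)) (𝓝[<] a) (𝓝 0) := by
    have h := ENNReal.tendsto_ofReal ((tendsto_const_nhds (x := a)).sub (tendsto_id (x := 𝓝 a)))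
    simpa using h.mono_left nhdsWithin_le_nhds
  refine tendsto_of_tendsto_of_tendsto_of_le_of_le tendsto_const_nhds hlen (fun _ => zero_le)
    fun t => ?_
  rw [Function.comp_apply, ← Real.volume_Ioc]
  exact Measure.restrict_le_self _

lemma coeFn_chiLp (s : Set ℝ) (hs : MeasurableSet s) : ⇑(chiLp s hs) =ᵐ[mu] s.indicator 1 :=
  indicatorConstLp_coeFn

lemma setIntegral_indicator_one_Icc {c δ : ℝ} (hc0 : 0 ≤ c) (hcδ : c ≤ δ) (hc1 : c ≤ 1) :
    ∫ t in Icc 0 c, (Icc 0 δ).indicator 1 t ∂mu = c := by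
  rw [integral_indicator_one measurableSet_Icc, measureReal_restrict_apply measurableSet_Icc,
    inter_eq_right.2 (Icc_subset_Icc_right hcδ), mu_real_Icc hc0 hc1]

lemma setIntegral_chiLp_Icc {c δ : ℝ} (hc0 : 0 ≤ c) (hcδ : c ≤ δ) (hc1 : c ≤ 1) :
    ∫ t in Icc 0 c, chiLp (Icc 0 δ) measurableSet_Icc t ∂mu = c := by
  rw [integral_congr_ae (ae_restrict_of_ae (coeFn_chiLp _ _)),
    setIntegral_indicator_one_Icc hc0 hcδ hc1]

lemma inner_chiLp (f : Lp ℝ 2 mu) (s : Set ℝ) (hs : MeasurableSet s) :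
    inner ℝ f (chiLp s hs) = ∫ t in s, f t ∂mu := by
  rw [real_inner_comm]
  exact L2.inner_indicatorConstLp_one hs _ f

lemma integrable_id_mul {x : ℝ → ℝ} (hx : Integrable x mu) : Integrable (fun s => s * x s) mu :=
  hx.bdd_mul measurable_id.aestronglyMeasurable
    (ae_mem_Icc_zero_one.mono fun _ hs => abs_le.2 ⟨by linarith [hs.1], hs.2⟩)

lemma integrable_min_mul {x : ℝ → ℝ} (hx : Integrable x mu) {c : ℝ} (hc : 0 ≤ c) :
    Integrable (fun s => min s c * x s) mu :=
  hx.bdd_mul (measurable_id.min measurable_const).aestronglyMeasurable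
    (ae_mem_Icc_zero_one.mono fun _ hs =>
      abs_le.2 ⟨by linarith [le_min hs.1 hc], (min_le_left _ _).trans hs.2⟩)

lemma integrable_uncurry_indicator_Ioc (ν : Measure ℝ) [IsFiniteMeasure ν] {x : ℝ → ℝ}
    (hx : Integrable x mu) :
    Integrable (Function.uncurry fun t s => (Ioc t 1).indicator x s) (ν.prod mu) := by
  have hT : MeasurableSet {p : ℝ × ℝ | p.2 ∈ Ioc p.1 1} :=
    (measurableSet_lt measurable_fst measurable_snd).inter
      (measurableSet_le measurable_snd measurable_const)
  exact (hx.comp_snd ν).indicator hT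

lemma integrable_setIntegral_Ioc {x : ℝ → ℝ} (hx : Integrable x mu) :
    Integrable (fun t => ∫ s in Ioc t 1, x s ∂mu) mu := by
  simpa only [Function.uncurry_apply_pair, integral_indicator measurableSet_Ioc] using
    (integrable_uncurry_indicator_Ioc mu hx).integral_prod_left

theorem setIntegral_Icc_setIntegral_Ioc {x : ℝ → ℝ} (hx : Integrable x mu) {c : ℝ} (hc : 0 ≤ c) :
    ∫ t in Icc 0 c, ∫ s in Ioc t 1, x s ∂mu ∂mu = ∫ s, min s c * x s ∂mu := by
  simp_rw [← integral_indicator measurableSet_Ioc]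
  rw [integral_integral_swap (integrable_uncurry_indicator_Ioc _ hx)]
  refine integral_congr_ae (ae_mem_Icc_zero_one.mono fun s hs => ?_)
  have hfiber : ∀ t, (Ioc t 1).indicator x s = (Iio s).indicator (fun _ => x s) t := by
    intro t
    by_cases ht : t ∈ Iio s
    · rw [indicator_of_mem (show s ∈ Ioc t 1 from ⟨ht, hs.2⟩), indicator_of_mem ht]
    · rw [indicator_of_notMem fun h => ht h.1, indicator_of_notMem ht]
  simp only [hfiber]
  rw [setIntegral_indicator measurableSet_Iio, setIntegral_const, mu_real_Icc_inter_Iio hc hs,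
    smul_eq_mul]

lemma Feas.congr {y y' : ℝ → ℝ} {p : (ℝ → ℝ) × ℝ} (hp : Feas y p) (h : y =ᵐ[mu] y') :
    Feas y' p :=
  ⟨hp.1, hp.2.1, hp.2.2.1, by filter_upwards [h, hp.2.2.2] with t ht hyt using ht ▸ hyt⟩

theorem Feas.setIntegral_Icc_le {y : ℝ → ℝ} {p : (ℝ → ℝ) × ℝ} (hp : Feas y p)
    (hy : Integrable y mu) {c : ℝ} (hc0 : 0 ≤ c) (hc1 : c ≤ 1) :
    ∫ t in Icc 0 c, y t ∂mu ≤ (∫ s, min s c * p.1 s ∂mu) + c * p.2 := by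
  have hx : Integrable p.1 mu := hp.1.integrable one_le_two
  have hF := integrable_setIntegral_Ioc hx
  calc ∫ t in Icc 0 c, y t ∂mu ≤ ∫ t in Icc 0 c, (∫ s in Ioc t 1, p.1 s ∂mu) + p.2 ∂mu :=
        setIntegral_mono_ae hy.integrableOn (hF.add (integrable_const _)).integrableOn hp.2.2.2
    _ = (∫ s, min s c * p.1 s ∂mu) + c * p.2 := by
        rw [integral_add hF.integrableOn (integrable_const _), setIntegral_const,
          setIntegral_Icc_setIntegral_Ioc hx hc0, mu_real_Icc hc0 hc1, smul_eq_mul]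

theorem Feas.setIntegral_Icc_le_cost {y : ℝ → ℝ} {p : (ℝ → ℝ) × ℝ} (hp : Feas y p)
    (hy : Integrable y mu) {α c : ℝ} (hc0 : 0 ≤ c) (hc1 : c ≤ 1) (hcα : c ≤ α) :
    ∫ t in Icc 0 c, y t ∂mu ≤ cost α p := by
  have hx : Integrable p.1 mu := hp.1.integrable one_le_two
  refine (hp.setIntegral_Icc_le hy hc0 hc1).trans (add_le_add ?_ ?_)
  · refine integral_mono_ae (integrable_min_mul hx hc0) (integrable_id_mul hx) ?_
    filter_upwards [hp.2.1] with s hs using mul_le_mul_of_nonneg_right (min_le_left _ _) hs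
  · exact mul_le_mul_of_nonneg_right hcα hp.2.2.1

theorem setIntegral_Icc_le_val {α c : ℝ} (hc0 : 0 ≤ c) (hc1 : c ≤ 1) (hcα : c ≤ α)
    (y : Lp ℝ 2 mu) : ((∫ t in Icc 0 c, y t ∂mu : ℝ) : EReal) ≤ val α y :=
  le_iInf₂ fun _ hp => EReal.coe_le_coe_iff.2 <|
    hp.setIntegral_Icc_le_cost ((Lp.memLp y).integrable one_le_two) hc0 hc1 hcα

lemma feas_indicator_Icc {δ r : ℝ} {x : ℝ → ℝ} (hx : MemLp x 2 mu) (hx0 : ∀ᵐ s ∂mu, 0 ≤ x s)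
    (hr : 0 ≤ r) (h : 1 ≤ (∫ s in Ioc δ 1, x s ∂mu) + r) :
    Feas ((Icc 0 δ).indicator 1) (x, r) := by
  refine ⟨hx, hx0, hr, Eventually.of_forall fun t => ?_⟩
  have hxi : Integrable x mu := hx.integrable one_le_two
  by_cases ht : t ∈ Icc 0 δ
  · rw [indicator_of_mem ht, Pi.one_apply]
    refine h.trans (add_le_add_left ?_ _)
    exact setIntegral_mono_set hxi.integrableOn (ae_restrict_of_ae hx0)
      (Ioc_subset_Ioc_left ht.2).eventuallyLE
  · rw [indicator_of_notMem ht]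
    exact add_nonneg (setIntegral_nonneg_of_ae_restrict (ae_restrict_of_ae hx0)) hr

lemma exists_feas_indicator_Icc_cost_le {α δ u : ℝ} (hδ0 : 0 ≤ δ) (hδu : δ < u) (hu1 : u ≤ 1) :
    ∃ p, Feas ((Icc 0 δ).indicator 1) p ∧ cost α p ≤ u := by
  set x : ℝ → ℝ := (Ioc δ u).indicator fun _ => (u - δ)⁻¹ with hx_def
  have hx0 : ∀ s, 0 ≤ x s := indicator_nonneg fun _ _ => inv_nonneg.2 (sub_nonneg.2 hδu.le)
  have hx : MemLp x 2 mu := memLp_indicator_const 2 measurableSet_Ioc _ (Or.inr (mu_ne_top _))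
  have hxi : Integrable x mu := hx.integrable one_le_two
  have hint : ∫ s, x s ∂mu = 1 := by
    rw [integral_indicator_const _ measurableSet_Ioc, mu_real_Ioc hδ0 hδu.le hu1, smul_eq_mul,
      mul_inv_cancel₀ (sub_ne_zero.2 hδu.ne')]
  refine ⟨(x, 0), feas_indicator_Icc hx (Eventually.of_forall hx0) le_rfl ?_, ?_⟩
  · rw [setIntegral_eq_integral_of_forall_compl_eq_zero fun s hs =>
      indicator_of_notMem (fun h => hs (Ioc_subset_Ioc_right hu1 h)) _, hint, add_zero]
  · calc cost α (x, 0) = ∫ s, s * x s ∂mu := by simp [cost]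
      _ ≤ ∫ s, u * x s ∂mu := integral_mono (integrable_id_mul hxi) (hxi.const_mul u) fun s => ?_
      _ = u := by rw [integral_const_mul, hint, mul_one]
    by_cases hs : s ∈ Ioc δ u
    · exact mul_le_mul_of_nonneg_right hs.2 (hx0 s)
    · simp [hx_def, hs]

lemma val_chiLp_Icc_le_left (α : ℝ) {δ : ℝ} (hδ0 : 0 ≤ δ) (hδ1 : δ < 1) :
    val α (chiLp (Icc 0 δ) measurableSet_Icc) ≤ δ := by
  refine EReal.le_of_forall_lt_iff_le.1 fun z hz => ?_
  obtain ⟨p, hp, hcost⟩ := exists_feas_indicator_Icc_cost_le (α := α) hδ0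
    (lt_min (EReal.coe_lt_coe_iff.1 hz) hδ1) (min_le_right z 1)
  calc val α _ ≤ cost α p := iInf₂_le p (hp.congr (coeFn_chiLp _ _).symm)
    _ ≤ z := EReal.coe_le_coe_iff.2 (hcost.trans (min_le_left _ _))

lemma feas_indicator_Icc_zero_one (δ : ℝ) : Feas ((Icc 0 δ).indicator 1) (0, 1) :=
  feas_indicator_Icc MemLp.zero (Eventually.of_forall fun _ => le_rfl) zero_le_one (by simp)

lemma val_chiLp_Icc_le_right (α δ : ℝ) : val α (chiLp (Icc 0 δ) measurableSet_Icc) ≤ α :=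
  (iInf₂_le _ ((feas_indicator_Icc_zero_one δ).congr (coeFn_chiLp _ _).symm)).trans_eq
    (by simp [cost])

theorem val_chiLp_Icc {α δ : ℝ} (hα : 0 ≤ α) (hδ0 : 0 ≤ δ) (hδ1 : δ < 1) :
    val α (chiLp (Icc 0 δ) measurableSet_Icc) = ((min δ α : ℝ) : EReal) := by
  refine le_antisymm ?_ ?_
  · rw [EReal.coe_strictMono.monotone.map_min]
    exact le_min (val_chiLp_Icc_le_left α hδ0 hδ1) (val_chiLp_Icc_le_right α δ)
  · have hm0 : 0 ≤ min δ α := le_min hδ0 hα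
    have hm1 : min δ α ≤ 1 := (min_le_left _ _).trans hδ1.le
    simpa only [setIntegral_chiLp_Icc hm0 (min_le_left _ _) hm1] using
      setIntegral_Icc_le_val hm0 hm1 (min_le_right _ _) (chiLp (Icc 0 δ) measurableSet_Icc)

lemma setIntegral_Ioc_eq_zero_of_integral_mul_eq {x : ℝ → ℝ} (hx : Integrable x mu)
    (hx0 : ∀ᵐ s ∂mu, 0 ≤ x s) {δ : ℝ} (hδ : 0 ≤ δ)
    (h : ∫ s, s * x s ∂mu = ∫ s, min s δ * x s ∂mu) : ∫ s in Ioc δ 1, x s ∂mu = 0 := by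
  have hint : Integrable (fun s => s * x s - min s δ * x s) mu :=
    (integrable_id_mul hx).sub (integrable_min_mul hx hδ)
  have hdiff : (fun s => s * x s - min s δ * x s) =ᵐ[mu] 0 := by
    refine (integral_eq_zero_iff_of_nonneg_ae ?_ hint).1 ?_
    · filter_upwards [hx0] with s hs
      exact sub_nonneg.2 (mul_le_mul_of_nonneg_right (min_le_left _ _) hs)
    · rw [integral_sub (integrable_id_mul hx) (integrable_min_mul hx hδ), h, sub_self]
  refine setIntegral_eq_zero_of_ae_eq_zero ?_
  filter_upwards [hdiff] with s hs hsδ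
  rw [Pi.zero_apply, min_eq_right hsδ.1.le, ← sub_mul] at hs
  exact (mul_eq_zero.1 hs).resolve_left (sub_ne_zero.2 hsδ.1.ne')

theorem Feas.cost_ne_of_lt {α δ : ℝ} {p : (ℝ → ℝ) × ℝ} (hp : Feas ((Icc 0 δ).indicator 1) p)
    (hδ0 : 0 < δ) (hδ1 : δ < 1) (hδα : δ < α) : cost α p ≠ δ := by
  intro hcost
  have hx : Integrable p.1 mu := hp.1.integrable one_le_two
  have hweak := hp.setIntegral_Icc_le ((integrable_const 1).indicator measurableSet_Icc)
    hδ0.le hδ1.le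
  rw [setIntegral_indicator_one_Icc hδ0.le le_rfl hδ1.le] at hweak
  have hmin : ∫ s, min s δ * p.1 s ∂mu ≤ ∫ s, s * p.1 s ∂mu := by
    refine integral_mono_ae (integrable_min_mul hx hδ0.le) (integrable_id_mul hx) ?_
    filter_upwards [hp.2.1] with s hs using mul_le_mul_of_nonneg_right (min_le_left _ _) hs
  rw [cost] at hcost
  have hgap : (α - δ) * p.2 ≤ 0 := by linarith
  have hr : p.2 = 0 :=
    le_antisymm (nonpos_of_mul_nonpos_right hgap (sub_pos.2 hδα)) hp.2.2.1
  rw [hr, mul_zero, add_zero] at hcost hweak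
  have hI : ∫ s in Ioc δ 1, p.1 s ∂mu = 0 :=
    setIntegral_Ioc_eq_zero_of_integral_mul_eq hx hp.2.1 hδ0.le (by linarith)
  have hfreq : ∃ᶠ t in 𝓝[<] δ, 1 ≤ ∫ s in Ioc t δ, p.1 s ∂mu := by
    refine ((frequently_nhdsLT_of_ae hδ0 hδ1.le hp.2.2.2).and_eventually
      (Ioo_mem_nhdsLT hδ0)).mono fun t ⟨ht, ht0⟩ => ?_
    rwa [indicator_of_mem (Ioo_subset_Icc_self ht0), Pi.one_apply, hr, add_zero,
      ← Ioc_union_Ioc_eq_Ioc ht0.2.le hδ1.le, setIntegral_union (Ioc_disjoint_Ioc_of_le le_rfl)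
      measurableSet_Ioc hx.integrableOn hx.integrableOn, hI, add_zero] at ht
  exact absurd (ge_of_tendsto_of_frequently (tendsto_setIntegral_Ioc_nhdsLT hx δ) hfreq)
    (by norm_num)

theorem exists_optimal_chiLp_Icc_iff {α δ : ℝ} (hα : 0 ≤ α) (hδ0 : 0 < δ) (hδ1 : δ < 1) :
    (∃ p : (ℝ → ℝ) × ℝ, Feas (⇑(chiLp (Icc 0 δ) measurableSet_Icc)) p ∧
      ((cost α p : ℝ) : EReal) = val α (chiLp (Icc 0 δ) measurableSet_Icc)) ↔ α ≤ δ := by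
  rw [val_chiLp_Icc hα hδ0.le hδ1]
  constructor
  · rintro ⟨p, hp, hcost⟩
    by_contra! hδα
    rw [EReal.coe_eq_coe_iff, min_eq_left hδα.le] at hcost
    exact (hp.congr (coeFn_chiLp _ _)).cost_ne_of_lt hδ0 hδ1 hδα hcost
  · intro hαδ
    exact ⟨(0, 1), (feas_indicator_Icc_zero_one δ).congr (coeFn_chiLp _ _).symm,
      by simp [cost, min_eq_right hαδ]⟩

lemma DFeas.setIntegral_Icc_le {α δ : ℝ} {z : ℝ → ℝ} (hz : DFeas α z) (hδ0 : 0 ≤ δ)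
    (hδ1 : δ < 1) : ∫ t in Icc 0 δ, z t ∂mu ≤ min δ α := by
  obtain ⟨hz2, hz0, hzt, hzα⟩ := hz
  have hzi : Integrable z mu := hz2.integrable one_le_two
  refine le_min ?_ ((setIntegral_le_integral hzi hz0).trans hzα)
  have hfreq : ∃ᶠ t in 𝓝[>] δ, ∫ s in Icc 0 δ, z s ∂mu ≤ t := by
    refine ((frequently_nhdsGT_of_ae hδ0 hδ1 hzt).and_eventually self_mem_nhdsWithin).mono
      fun t ⟨ht, hδt⟩ => ?_
    calc ∫ s in Icc 0 δ, z s ∂mu ≤ ∫ s in Icc 0 t, z s ∂mu :=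
          setIntegral_mono_set hzi.integrableOn (ae_restrict_of_ae hz0)
            (Icc_subset_Icc_right (le_of_lt hδt)).eventuallyLE
      _ = ∫ s in Ioc 0 t, z s ∂mu := setIntegral_congr_set Ioc_ae_eq_Icc.symm
      _ ≤ t := ht
  exact ge_of_tendsto_of_frequently (tendsto_nhdsWithin_of_tendsto_nhds tendsto_id) hfreq

lemma dFeas_indicator_Icc {α m : ℝ} (hm0 : 0 ≤ m) (hm1 : m ≤ 1) (hmα : m ≤ α) :
    DFeas α ((Icc 0 m).indicator 1) := by
  refine ⟨memLp_indicator_const 2 measurableSet_Icc 1 (Or.inr (mu_ne_top _)),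
    Eventually.of_forall (indicator_nonneg fun _ _ => zero_le_one),
    ae_mem_Icc_zero_one.mono fun t ht => ?_, ?_⟩
  · rw [integral_indicator_one measurableSet_Icc, measureReal_restrict_apply measurableSet_Icc]
    calc mu.real (Icc 0 m ∩ Ioc 0 t) ≤ mu.real (Ioc 0 t) := measureReal_mono inter_subset_right
      _ = t := by rw [mu_real_Ioc le_rfl ht.1 ht.2, sub_zero]
  · rwa [integral_indicator_one measurableSet_Icc, mu_real_Icc hm0 hm1]

lemma integral_indicator_Icc_mul (δ : ℝ) (z : ℝ → ℝ) :
    ∫ t, (Icc 0 δ).indicator 1 t * z t ∂mu = ∫ t in Icc 0 δ, z t ∂mu := by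
  simp_rw [← indicator_mul_left, Pi.one_apply, one_mul]
  exact integral_indicator measurableSet_Icc

lemma integral_indicator_Icc_mul_indicator_Icc {m δ : ℝ} (hm0 : 0 ≤ m) (hmδ : m ≤ δ)
    (hm1 : m ≤ 1) : ∫ t, (Icc 0 δ).indicator 1 t * (Icc 0 m).indicator 1 t ∂mu = m := by
  change ∫ t, ((Icc 0 δ).indicator 1 * (Icc 0 m).indicator 1 : ℝ → ℝ) t ∂mu = m
  rw [← inter_indicator_one, inter_eq_right.2 (Icc_subset_Icc_right hmδ),
    integral_indicator_one measurableSet_Icc, mu_real_Icc hm0 hm1]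

theorem valD_indicator_Icc {α δ : ℝ} (hα : 0 ≤ α) (hδ0 : 0 ≤ δ) (hδ1 : δ < 1) :
    valD α ((Icc 0 δ).indicator 1) = ((min δ α : ℝ) : EReal) := by
  refine le_antisymm (iSup₂_le fun z hz => ?_) ?_
  · rw [integral_indicator_Icc_mul, EReal.coe_le_coe_iff]
    exact hz.setIntegral_Icc_le hδ0 hδ1
  · have hm0 : 0 ≤ min δ α := le_min hδ0 hα
    have hm1 : min δ α ≤ 1 := (min_le_left _ _).trans hδ1.le
    refine le_trans ?_ (le_iSup₂ (f := fun z (_ : DFeas α z) =>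
      ((∫ t, (Icc 0 δ).indicator 1 t * z t ∂mu : ℝ) : EReal)) _
      (dFeas_indicator_Icc hm0 hm1 (min_le_right _ _)))
    rw [integral_indicator_Icc_mul_indicator_Icc hm0 (min_le_left _ _) hm1]

theorem subdiffL2_chiLp_Icc_nonempty {α δ : ℝ} (hα : 0 ≤ α) (hδ0 : 0 ≤ δ) (hδ1 : δ < 1) :
    (subdiffL2 α (chiLp (Icc 0 δ) measurableSet_Icc)).Nonempty := by
  have hm0 : 0 ≤ min δ α := le_min hδ0 hα
  have hm1 : min δ α ≤ 1 := (min_le_left _ _).trans hδ1.le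
  refine ⟨chiLp (Icc 0 (min δ α)) measurableSet_Icc, min δ α, val_chiLp_Icc hα hδ0 hδ1,
    fun y => ?_⟩
  rw [inner_sub_left, inner_chiLp, inner_chiLp, setIntegral_chiLp_Icc hm0 (min_le_left _ _) hm1,
    sub_add_cancel]
  exact setIntegral_Icc_le_val hm0 hm1 (min_le_right _ _) y

/-- In Kretschmer's setting with `α > 0`, `δ ∈ (0,1)` and
`b := χ_{[0,δ]}`: `val(P_b) = val(D_b) = min{δ,α}`; the dual problem has the optimal
solution `z = χ_{[0,min{α,δ}]}`; hence `∂v(b) ≠ ∅`; and the primal problem has an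
optimal solution iff `α ≤ δ`. -/
theorem stmt18 (α δ : ℝ) (hα : 0 < α) (hδ0 : 0 < δ) (hδ1 : δ < 1) :
    val α (chiLp (Set.Icc 0 δ) measurableSet_Icc) = ((min δ α : ℝ) : EReal) ∧
    valD α ((Set.Icc 0 δ).indicator 1) = ((min δ α : ℝ) : EReal) ∧
    (DFeas α ((Set.Icc 0 (min α δ)).indicator 1) ∧
      ((∫ t, (Set.Icc 0 δ).indicator 1 t * (Set.Icc 0 (min α δ)).indicator 1 t ∂mu : ℝ)
        : EReal) = valD α ((Set.Icc 0 δ).indicator 1)) ∧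
    (subdiffL2 α (chiLp (Set.Icc 0 δ) measurableSet_Icc)).Nonempty ∧
    ((∃ p : (ℝ → ℝ) × ℝ, Feas (⇑(chiLp (Set.Icc 0 δ) measurableSet_Icc)) p ∧
        ((cost α p : ℝ) : EReal) = val α (chiLp (Set.Icc 0 δ) measurableSet_Icc)) ↔
      α ≤ δ) := by
  have hvalD := valD_indicator_Icc hα.le hδ0.le hδ1
  have hm0 : 0 ≤ min α δ := le_min hα.le hδ0.le
  have hm1 : min α δ ≤ 1 := (min_le_right _ _).trans hδ1.le
  refine ⟨val_chiLp_Icc hα.le hδ0.le hδ1, hvalD,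
    ⟨dFeas_indicator_Icc hm0 hm1 (min_le_left _ _), ?_⟩,
    subdiffL2_chiLp_Icc_nonempty hα.le hδ0.le hδ1, exists_optimal_chiLp_Icc_iff hα.le hδ0 hδ1⟩
  rw [hvalD, integral_indicator_Icc_mul_indicator_Icc hm0 (min_le_right _ _) hm1, min_comm]
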